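/- arXiv:1211.4301 — 4 statements merged into one kernel-verified Lean document; each statement's English description precedes it below -/
import Mathlib

section
/- The maps I ↦ H(I) and H ↦ I_H give a one-to-one correspondence between square-free monomial ideals in K[A] (with fixed finite alphabet A) and separated labeled hypergraphs on alphabet A, up to permutation of the vertices. Concretely: I_{H(I)} = I for every square-free monomial ideal I, and for every separated labeled hypergraph H, H(I_H) equals H up to a bijection of the vertex sets. -/
/-!
Common setup: square-free monomial ideals in `R = K[A]` (here `MvPolynomial σ K`
with `σ` the finite alphabet `A`), encoded by the finite antichain `G` of
supports of their minimal monomial generators; the labeled hypergraph `H(I)`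
of such an ideal, whose vertex set is (in bijection with) `G` and whose edge
labeled by a variable `a` is `E_a = { S ∈ G : a ∈ S }`; and Castelnuovo–Mumford
regularity and projective dimension of `R/I`, defined via graded Betti numbers
`β_{ij}(R/I) = dim_K Tor_i^R(R/I, K)_j`, which are computed from the Koszul
complex of the variables tensored with `R/I`.
-/

open MvPolynomial Finset
open scoped Classical

namespace SqfreeHyp

variable (σ : Type) [Fintype σ] [LinearOrder σ] (K : Type) [Field K]

/-- The square-free monomial `∏_{a ∈ S} a`. -/
noncomputable def sqMon (S : Finset σ) : MvPolynomial σ K := ∏ a ∈ S, X a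

/-- The square-free monomial ideal whose (minimal) monomial generators have
supports exactly the members of `G`. -/
noncomputable def monIdeal (G : Finset (Finset σ)) : Ideal (MvPolynomial σ K) :=
  Ideal.span ((fun S => sqMon σ K S) '' (G : Set (Finset σ)))

/-- `G` is an antichain under inclusion (= divisibility of the square-free
monomials): the corresponding monomial generating set is minimal. -/
def MinGens (G : Finset (Finset σ)) : Prop := ∀ S ∈ G, ∀ T ∈ G, S ⊆ T → S = T

/-- `E_a`: the edge of the labeled hypergraph `H(I)` labeled by the variable `a`,
consisting of the (vertices corresponding to the) generators divisible by `a`. -/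
def EdgeOf (G : Finset (Finset σ)) (a : σ) : Finset (Finset σ) :=
  G.filter (fun S => a ∈ S)

/-- The set `𝓔` of (nonempty) edges of the labeled hypergraph. -/
noncomputable def edgeSet (G : Finset (Finset σ)) : Finset (Finset (Finset σ)) :=
  (Finset.univ.image (EdgeOf σ G)).filter (· ≠ ∅)

/-- `X`: the set of variables appearing among the generators (the labels). -/
def varsOf (G : Finset (Finset σ)) : Finset σ := G.biUnion id

/-- A vertex is closed if its singleton is an edge. -/
def Closed (G : Finset (Finset σ)) (v : Finset σ) : Prop :=
  ∃ a : σ, EdgeOf σ G a = {v}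

/-- The neighbors `N_H(v)` of a vertex: the other vertices sharing an edge with `v`. -/
noncomputable def Neighbors (G : Finset (Finset σ)) (v : Finset σ) : Finset (Finset σ) :=
  G.filter (fun w => w ≠ v ∧ ∃ a : σ, v ∈ EdgeOf σ G a ∧ w ∈ EdgeOf σ G a)

/-- The open (= not closed) vertices. -/
noncomputable def openVerts (G : Finset (Finset σ)) : Finset (Finset σ) :=
  G.filter (fun v => ¬ Closed σ G v)

/-- The minimal members of a family of supports (used to pass to the minimal
monomial generating sets of colon ideals and sums). -/
def minimalize (A : Finset (Finset σ)) : Finset (Finset σ) :=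
  A.filter (fun S => ∀ T ∈ A, T ⊆ S → T = S)

/-- An edge is simple if it has at least two vertices and has no proper
subedge besides `∅`. -/
def SimpleEdge (G : Finset (Finset σ)) (F : Finset (Finset σ)) : Prop :=
  F ∈ edgeSet σ G ∧ 2 ≤ F.card ∧ ∀ F' ∈ edgeSet σ G, F' ⊆ F → F' = F

/-- The set of simple edges. -/
noncomputable def simpleEdges (G : Finset (Finset σ)) : Finset (Finset (Finset σ)) :=
  (edgeSet σ G).filter (fun F => SimpleEdge σ G F)

/-- `H(I)` has isolated simple edges: every open vertex is contained in
exactly one simple edge. -/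
def HasIsolatedSimpleEdges (G : Finset (Finset σ)) : Prop :=
  ∀ v ∈ G, ¬ Closed σ G v → ∃! F : Finset (Finset σ), SimpleEdge σ G F ∧ v ∈ F

/-! ### Regularity via graded Betti numbers.
`β_{ij}(R/I) = dim_K Tor_i^R(R/I,K)_j` where `Tor` is computed by the Koszul
complex on the variables of `R` tensored with `R/I`; its `i`-th term has basis
indexed by `i`-element subsets of the variables, with coefficients in `R/I`. -/

/-- Index of the degree-`i` term of the Koszul complex. -/
abbrev KT (i : ℕ) : Type _ := {T : Finset σ // T.card = i}

/-- The Koszul differential on `K_•(x_a : a) ⊗ R/I`. -/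
noncomputable def kd (I : Ideal (MvPolynomial σ K)) (i : ℕ)
    (c : KT σ i →₀ (MvPolynomial σ K ⧸ I)) :
    KT σ (i - 1) →₀ (MvPolynomial σ K ⧸ I) :=
  c.sum fun T m => ∑ a ∈ T.1.attach,
    ((-1 : ℤ) ^ ((T.1.filter (fun b => b < a.1)).card)) •
      Finsupp.single
        (⟨T.1.erase a.1, by rw [Finset.card_erase_of_mem a.2, T.2]⟩ : KT σ (i - 1))
        ((X a.1 : MvPolynomial σ K) • m)

/-- `c` is homogeneous of internal degree `j` (each coefficient at a size-`i`
subset is the class of a homogeneous polynomial of degree `j - i`). -/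
def IsHomogEl (I : Ideal (MvPolynomial σ K)) (i j : ℕ)
    (c : KT σ i →₀ (MvPolynomial σ K ⧸ I)) : Prop :=
  ∀ T : KT σ i, ∃ p : MvPolynomial σ K,
    p.IsHomogeneous (j - i) ∧ Ideal.Quotient.mk I p = c T

/-- The graded Betti number `β_{ij}(R/I)` is nonzero: there is a homogeneous
cycle of internal degree `j` in homological degree `i` of the Koszul complex
tensored with `R/I` which is not a boundary. -/
def BettiNe (I : Ideal (MvPolynomial σ K)) (i j : ℕ) : Prop :=
  ∃ c : KT σ i →₀ (MvPolynomial σ K ⧸ I),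
    IsHomogEl σ K I i j c ∧ kd σ K I i c = 0 ∧
    ∀ b : KT σ (i + 1) →₀ (MvPolynomial σ K ⧸ I), kd σ K I (i + 1) b ≠ c

/-- Castelnuovo–Mumford regularity of `R/I`: `max { j - i : β_{ij}(R/I) ≠ 0 }`. -/
noncomputable def reg (I : Ideal (MvPolynomial σ K)) : ℤ :=
  sSup { d : ℤ | ∃ i j : ℕ, BettiNe σ K I i j ∧ d = (j : ℤ) - (i : ℤ) }

/-- Projective dimension of `R/I`: `max { i : β_{ij}(R/I) ≠ 0 for some j }`. -/
noncomputable def pdim (I : Ideal (MvPolynomial σ K)) : ℕ :=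
  sSup { i : ℕ | ∃ j : ℕ, BettiNe σ K I i j }

end SqfreeHyp

open SqfreeHyp

/-- the one-to-one correspondence between square-free
monomial ideals and separated labeled hypergraphs up to vertex permutation.
First conjunct: `I_{H(I)} = I`, since the label set `L_v` of the vertex
corresponding to a generator with support `S` is `S` itself.
Second conjunct: for a separated labeled hypergraph `(Fin μ, E)`, the map
`v ↦ L_v` is a bijection from `Fin μ` onto the vertex set of `H(I_H)`
(the minimal generating supports of `I_H`), which identifies the edge
`E_a` of `H` with the edge of `H(I_H)` labeled by `a`; i.e. `H(I_H) = H`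
up to a bijection of vertex sets. -/
theorem stmt_1 (σ : Type) [Fintype σ] [LinearOrder σ] (K : Type) [Field K] :
    (∀ G : Finset (Finset σ), MinGens σ G →
      (∀ S ∈ G, (Finset.univ.filter fun a : σ => S ∈ EdgeOf σ G a) = S) ∧
      monIdeal σ K (G.image fun S => Finset.univ.filter fun a : σ => S ∈ EdgeOf σ G a)
        = monIdeal σ K G) ∧
    (∀ (μ : ℕ) (E : σ → Finset (Fin μ)),
      (∀ v w : Fin μ, v ≠ w →
        ∃ a b : σ, v ∈ E a ∧ w ∉ E a ∧ w ∈ E b ∧ v ∉ E b) →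
      Function.Injective (fun v : Fin μ => Finset.univ.filter fun a : σ => v ∈ E a) ∧
      MinGens σ (Finset.univ.image fun v : Fin μ => Finset.univ.filter fun a : σ => v ∈ E a) ∧
      (∀ a : σ,
        EdgeOf σ (Finset.univ.image fun v : Fin μ => Finset.univ.filter fun a' : σ => v ∈ E a') a
          = (E a).image fun v => Finset.univ.filter fun a' : σ => v ∈ E a') ∧
      monIdeal σ K (Finset.univ.image fun v : Fin μ => Finset.univ.filter fun a : σ => v ∈ E a)
        = Ideal.span
            (Set.range fun v : Fin μ => sqMon σ K (Finset.univ.filter fun a : σ => v ∈ E a))) := by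
  constructor
  · intro G _
    have hfix : ∀ S ∈ G, (Finset.univ.filter fun a : σ => S ∈ EdgeOf σ G a) = S := by
      intro S hS
      ext a
      simp [EdgeOf, hS]
    refine ⟨hfix, ?_⟩
    have : (G.image fun S => Finset.univ.filter fun a : σ => S ∈ EdgeOf σ G a) = G := by
      ext T
      simp only [Finset.mem_image]
      constructor
      · rintro ⟨S, hS, rfl⟩; rw [hfix S hS]; exact hS
      · intro hT; exact ⟨T, hT, hfix T hT⟩
    rw [this]
  · intro μ E hsep
    set L : Fin μ → Finset σ := fun v => Finset.univ.filter fun a : σ => v ∈ E a with hL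
    have hmemL : ∀ (v : Fin μ) (a : σ), a ∈ L v ↔ v ∈ E a := by
      intro v a; simp [hL]
    have hinj : Function.Injective L := by
      intro v w h
      by_contra hne
      obtain ⟨a, b, hva, hwa, _, _⟩ := hsep v w hne
      have : a ∈ L v := (hmemL v a).2 hva
      rw [h] at this
      exact hwa ((hmemL w a).1 this)
    refine ⟨hinj, ?_, ?_, ?_⟩
    · intro S hS T hT hST
      simp only [Finset.mem_image, Finset.mem_univ, true_and] at hS hT
      obtain ⟨v, rfl⟩ := hS
      obtain ⟨w, rfl⟩ := hT
      by_contra hne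
      have hvw : v ≠ w := fun h => hne (by rw [h])
      obtain ⟨a, b, hva, hwa, _, _⟩ := hsep v w hvw
      exact hwa ((hmemL w a).1 (hST ((hmemL v a).2 hva)))
    · intro a
      ext T
      simp only [EdgeOf, Finset.mem_filter, Finset.mem_image, Finset.mem_univ, true_and]
      constructor
      · rintro ⟨⟨v, rfl⟩, haT⟩
        exact ⟨v, (hmemL v a).1 haT, rfl⟩
      · rintro ⟨v, hv, rfl⟩
        exact ⟨⟨v, rfl⟩, (hmemL v a).2 hv⟩
    · unfold monIdeal
      congr 1
      ext p
      simp only [Set.mem_image, Finset.coe_image, Set.mem_range, Finset.coe_univ,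
        Set.image_univ]
      constructor
      · rintro ⟨S, ⟨v, rfl⟩, rfl⟩; exact ⟨v, rfl⟩
      · rintro ⟨v, rfl⟩; exact ⟨L v, ⟨v, rfl⟩, rfl⟩
end

section
/- Let I be a square-free monomial ideal with minimal monomial generators f_1,...,f_μ. The Taylor resolution of R/I is a minimal free resolution if and only if for every i, lcm(f_1,...,f_μ) ≠ lcm(f_1,...,f̂_i,...,f_μ), equivalently if and only if every minimal generator f_i is divisible by some variable dividing no other generator f_j (j ≠ i); i.e., if and only if the labeled hypergraph H(I) is saturated. -/
/-!
Common setup: square-free monomial ideals in `R = K[A]` (here `MvPolynomial σ K`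
with `σ` the finite alphabet `A`), encoded by the finite antichain `G` of
supports of their minimal monomial generators; the labeled hypergraph `H(I)`
of such an ideal, whose vertex set is (in bijection with) `G` and whose edge
labeled by a variable `a` is `E_a = { S ∈ G : a ∈ S }`; and Castelnuovo–Mumford
regularity and projective dimension of `R/I`, defined via graded Betti numbers
`β_{ij}(R/I) = dim_K Tor_i^R(R/I, K)_j`, which are computed from the Koszul
complex of the variables tensored with `R/I`.
-/

open MvPolynomial Finset
open scoped Classical

open SqfreeHyp

/-- The Taylor resolution of `R/I` is minimal: every entry of every
differential lies in the maximal ideal, i.e. for every subset `F` of the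
generators and every generator `S ∈ F`, the ratio `lcm(f_F)/lcm(f_{F∖S})`
is a nonunit; for square-free monomials, `lcm(f_F)` is the monomial with
support `⋃_{S ∈ F} S`, so this says these unions differ. -/
def TaylorMinimal (σ : Type) [Fintype σ] [LinearOrder σ]
    (G : Finset (Finset σ)) : Prop :=
  ∀ F ⊆ G, ∀ S ∈ F, F.biUnion id ≠ (F.erase S).biUnion id

/-- for a square-free monomial ideal with minimal monomial
generators (of supports) `G`, the Taylor resolution of `R/I` is minimal iff
`lcm(f_1,…,f_μ) ≠ lcm(f_1,…,f̂_i,…,f_μ)` for every `i`, equivalently iff every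
generator has a variable dividing no other generator, i.e. iff the labeled
hypergraph `H(I)` is saturated (every vertex is closed). -/
theorem stmt_2 (σ : Type) [Fintype σ] [LinearOrder σ] (K : Type) [Field K]
    (I : Ideal (MvPolynomial σ K)) (G : Finset (Finset σ))
    (hIG : I = monIdeal σ K G) (hmin : MinGens σ G) :
    (TaylorMinimal σ G ↔ ∀ S ∈ G, G.biUnion id ≠ (G.erase S).biUnion id) ∧
    (TaylorMinimal σ G ↔ ∀ S ∈ G, ∃ a ∈ S, ∀ T ∈ G, a ∈ T → T = S) ∧
    (TaylorMinimal σ G ↔ ∀ S ∈ G, Closed σ G S) := by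
  have h31 : (∀ S ∈ G, ∃ a ∈ S, ∀ T ∈ G, a ∈ T → T = S) → TaylorMinimal σ G := by
    intro h3 F hF S hS heq
    obtain ⟨a, haS, hpriv⟩ := h3 S (hF hS)
    have haU : a ∈ F.biUnion id := Finset.mem_biUnion.2 ⟨S, hS, haS⟩
    rw [heq] at haU
    obtain ⟨T, hT, haT⟩ := Finset.mem_biUnion.1 haU
    have hTS := hpriv T (hF (Finset.mem_of_mem_erase hT)) haT
    exact (Finset.ne_of_mem_erase hT) hTS
  have h23 : (∀ S ∈ G, G.biUnion id ≠ (G.erase S).biUnion id) →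
      (∀ S ∈ G, ∃ a ∈ S, ∀ T ∈ G, a ∈ T → T = S) := by
    intro h2 S hS
    by_contra hcon
    push_neg at hcon
    apply h2 S hS
    apply Finset.Subset.antisymm
    · intro a ha
      obtain ⟨T, hT, haT⟩ := Finset.mem_biUnion.1 ha
      by_cases hTS : T = S
      · subst hTS
        obtain ⟨U, hU, haU, hUS⟩ := hcon a haT
        exact Finset.mem_biUnion.2 ⟨U, Finset.mem_erase.2 ⟨hUS, hU⟩, haU⟩
      · exact Finset.mem_biUnion.2 ⟨T, Finset.mem_erase.2 ⟨hTS, hT⟩, haT⟩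
    · exact Finset.biUnion_subset_biUnion_of_subset_left id (Finset.erase_subset _ _)
  have h12 : TaylorMinimal σ G → (∀ S ∈ G, G.biUnion id ≠ (G.erase S).biUnion id) :=
    fun h1 S hS => h1 G (Finset.Subset.refl G) S hS
  have h34 : (∀ S ∈ G, ∃ a ∈ S, ∀ T ∈ G, a ∈ T → T = S) ↔ (∀ S ∈ G, Closed σ G S) := by
    constructor
    · intro h3 S hS
      obtain ⟨a, haS, hpriv⟩ := h3 S hS
      refine ⟨a, ?_⟩
      ext T
      simp only [EdgeOf, Finset.mem_filter, Finset.mem_singleton]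
      constructor
      · rintro ⟨hT, haT⟩; exact hpriv T hT haT
      · rintro rfl; exact ⟨hS, haS⟩
    · intro h4 S hS
      obtain ⟨a, ha⟩ := h4 S hS
      have hSmem : S ∈ EdgeOf σ G a := by rw [ha]; exact Finset.mem_singleton_self S
      refine ⟨a, (Finset.mem_filter.1 hSmem).2, fun T hT haT => ?_⟩
      have : T ∈ EdgeOf σ G a := Finset.mem_filter.2 ⟨hT, haT⟩
      rw [ha] at this
      exact Finset.mem_singleton.1 this
  exact ⟨⟨h12, fun h2 => h31 (h23 h2)⟩,
    ⟨fun h1 => h23 (h12 h1), h31⟩,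
    ⟨fun h1 => h34.1 (h23 (h12 h1)), fun h4 => h31 (h34.2 h4)⟩⟩
end

section
/- Let I ⊆ R be a square-free monomial ideal with minimal generators f_1,...,f_μ and labeled hypergraph H = H(I) with exactly n isolated open vertices. Suppose vertex 1 is an isolated open vertex, vertex μ is closed, and μ ∈ N_H(1). Let J = (f_1,...,f_{μ−1}) and z = f_μ, with H' = H(J:z) = (V', X', E', 𝓔') and H'' = H(J) = (V'', X'', E'', 𝓔''). Then: (a) H' and H'' each have at most n isolated open vertices and no two open vertices are adjacent; (b) in H', either vertex 1 is closed or |N_{H'}(1)| ≤ |N_H(1)| − 1; (c) in H'', either vertex 1 is closed or |N_{H''}(1)| ≤ |N_H(1)| − 1; and moreover |X''| ≤ |X| − 1, |V''| = |V| − 1, and |X'| ≤ |X| − deg(z) − |V| + |V'| + 1. -/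
/-!
Common setup: square-free monomial ideals in `R = K[A]` (here `MvPolynomial σ K`
with `σ` the finite alphabet `A`), encoded by the finite antichain `G` of
supports of their minimal monomial generators; the labeled hypergraph `H(I)`
of such an ideal, whose vertex set is (in bijection with) `G` and whose edge
labeled by a variable `a` is `E_a = { S ∈ G : a ∈ S }`; and Castelnuovo–Mumford
regularity and projective dimension of `R/I`, defined via graded Betti numbers
`β_{ij}(R/I) = dim_K Tor_i^R(R/I, K)_j`, which are computed from the Koszul
complex of the variables tensored with `R/I`.
-/

open MvPolynomial Finset
open scoped Classical

open SqfreeHyp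


section Aux

open Finset
open scoped Classical

variable {σ : Type} [Fintype σ] [LinearOrder σ]

lemma mem_EdgeOf' {G : Finset (Finset σ)} {a : σ} {S : Finset σ} :
    S ∈ EdgeOf σ G a ↔ S ∈ G ∧ a ∈ S := by
  simp [EdgeOf]

lemma closed_iff' {G : Finset (Finset σ)} {v : Finset σ} :
    Closed σ G v ↔ ∃ a, a ∈ v ∧ v ∈ G ∧ ∀ S ∈ G, a ∈ S → S = v := by
  constructor
  · rintro ⟨a, ha⟩
    have hv : v ∈ EdgeOf σ G a := by rw [ha]; exact Finset.mem_singleton_self v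
    rw [mem_EdgeOf'] at hv
    refine ⟨a, hv.2, hv.1, fun S hS haS => ?_⟩
    have : S ∈ EdgeOf σ G a := mem_EdgeOf'.2 ⟨hS, haS⟩
    rwa [ha, Finset.mem_singleton] at this
  · rintro ⟨a, hav, hvG, h⟩
    refine ⟨a, ?_⟩
    ext S
    rw [mem_EdgeOf', Finset.mem_singleton]
    constructor
    · rintro ⟨hS, haS⟩; exact h S hS haS
    · rintro rfl; exact ⟨hvG, hav⟩

lemma mem_Neighbors' {G : Finset (Finset σ)} {v w : Finset σ} :
    w ∈ Neighbors σ G v ↔ w ∈ G ∧ w ≠ v ∧ v ∈ G ∧ ∃ a, a ∈ v ∧ a ∈ w := by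
  simp only [Neighbors, Finset.mem_filter, mem_EdgeOf']
  constructor
  · rintro ⟨h1, h2, a, ⟨h3, h4⟩, ⟨h5, h6⟩⟩
    exact ⟨h1, h2, h3, a, h4, h6⟩
  · rintro ⟨h1, h2, h3, a, h4, h6⟩
    exact ⟨h1, h2, a, ⟨h3, h4⟩, ⟨h1, h6⟩⟩

lemma mem_openVerts' {G : Finset (Finset σ)} {v : Finset σ} :
    v ∈ openVerts σ G ↔ v ∈ G ∧ ¬ Closed σ G v := by
  simp [openVerts]

lemma mem_varsOf' {G : Finset (Finset σ)} {a : σ} :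
    a ∈ varsOf σ G ↔ ∃ S ∈ G, a ∈ S := by
  simp [varsOf]

lemma card_le_of_sdiff_section {s t : Finset (Finset σ)} {Z : Finset σ}
    (h : ∀ T ∈ s, ∃ S ∈ t, S \ Z = T) : s.card ≤ t.card := by
  have h' : ∀ T : Finset σ, ∃ S, T ∈ s → S ∈ t ∧ S \ Z = T := by
    intro T
    by_cases hT : T ∈ s
    · obtain ⟨S, hS, hST⟩ := h T hT
      exact ⟨S, fun _ => ⟨hS, hST⟩⟩
    · exact ⟨∅, fun h' => absurd h' hT⟩
  choose f hf using h'
  apply Finset.card_le_card_of_injOn f (fun T hT => (hf T hT).1)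
  intro T₁ h1 T₂ h2 he
  rw [← (hf T₁ h1).2, ← (hf T₂ h2).2, he]

end Aux

/-- Lemma `Liso`: let `I` have minimal generating supports
`G`, with all open vertices isolated and exactly `n` of them; let `v` be an
isolated open vertex and `Z ∈ N(v)` a closed vertex (the supports of `f_1` and
`z = f_μ`).  `J = (f_1,…,f_{μ−1})` has supports `G'' = G ∖ {Z}`, and `J : z`
has minimal generating supports `G' = minimalize {S ∖ Z : S ∈ G, S ≠ Z}`.
Then (a) `H' = H(J:z)` and `H'' = H(J)` have only isolated open vertices, at
most `n` of them; (b) in `H'` either `v` (i.e. its new support `v ∖ Z`) is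
closed—and then `H'` has fewer than `n` open vertices—or it has lost a
neighbor; (c) likewise in `H''`; moreover `|X''| ≤ |X| − 1`, `|V''| = |V| − 1`
and `|X'| ≤ |X| − deg z − |V| + |V'| + 1` (with `deg z = |Z|`). -/


theorem stmt_9 (σ : Type) [Fintype σ] [LinearOrder σ] (K : Type) [Field K]
    (G : Finset (Finset σ)) (hmin : MinGens σ G) (hne : ∀ S ∈ G, S.Nonempty)
    (hiso : ∀ u ∈ G, ¬ Closed σ G u → ∀ w ∈ Neighbors σ G u, Closed σ G w)
    (n : ℕ) (hn : (openVerts σ G).card = n)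
    (v Z : Finset σ) (hv : v ∈ G) (hvopen : ¬ Closed σ G v)
    (hZ : Z ∈ G) (hZc : Closed σ G Z) (hZN : Z ∈ Neighbors σ G v)
    (G' G'' : Finset (Finset σ))
    (hG' : G' = minimalize σ ((G.erase Z).image fun S => S \ Z))
    (hG'' : G'' = G.erase Z) :
    ((∀ u ∈ G', ¬ Closed σ G' u → ∀ w ∈ Neighbors σ G' u, Closed σ G' w) ∧
      (openVerts σ G').card ≤ n) ∧
    ((∀ u ∈ G'', ¬ Closed σ G'' u → ∀ w ∈ Neighbors σ G'' u, Closed σ G'' w) ∧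
      (openVerts σ G'').card ≤ n) ∧
    (v \ Z ∈ G' ∧
      ((Closed σ G' (v \ Z) ∧ (openVerts σ G').card < n) ∨
        (Neighbors σ G' (v \ Z)).card ≤ (Neighbors σ G v).card - 1)) ∧
    ((Closed σ G'' v ∧ (openVerts σ G'').card < n) ∨
      (Neighbors σ G'' v).card ≤ (Neighbors σ G v).card - 1) ∧
    ((varsOf σ G'').card : ℤ) ≤ ((varsOf σ G).card : ℤ) - 1 ∧
    (G''.card : ℤ) = (G.card : ℤ) - 1 ∧
    ((varsOf σ G').card : ℤ) ≤
      ((varsOf σ G).card : ℤ) - (Z.card : ℤ) - (G.card : ℤ) + (G'.card : ℤ) + 1 := by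
  classical
  have hG''mem : ∀ S : Finset σ, S ∈ G'' ↔ S ∈ G ∧ S ≠ Z := by
    intro S; rw [hG'', Finset.mem_erase]; tauto
  have hG'mem : ∀ T : Finset σ, T ∈ G' ↔
      ((∃ S, (S ∈ G ∧ S ≠ Z) ∧ S \ Z = T) ∧
        ∀ S, S ∈ G → S ≠ Z → S \ Z ⊆ T → S \ Z = T) := by
    intro T
    rw [hG', minimalize, Finset.mem_filter]
    simp only [Finset.mem_image, Finset.mem_erase]
    constructor
    · rintro ⟨⟨S, ⟨hSZ, hSG⟩, hST⟩, h2⟩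
      exact ⟨⟨S, ⟨hSG, hSZ⟩, hST⟩, fun S hS hSZ hsub => h2 _ ⟨S, ⟨hSZ, hS⟩, rfl⟩ hsub⟩
    · rintro ⟨⟨S, ⟨hSG, hSZ⟩, hST⟩, h2⟩
      refine ⟨⟨S, ⟨hSZ, hSG⟩, hST⟩, ?_⟩
      rintro U ⟨S₁, ⟨h1, h1'⟩, rfl⟩ hsub
      exact h2 S₁ h1' h1 hsub
  have hvZ : Z ≠ v := (mem_Neighbors'.1 hZN).2.1
  have hnonempty : ∀ S, S ∈ G → S ≠ Z → (S \ Z).Nonempty := by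
    intro S hS hSZ
    rw [Finset.sdiff_nonempty]
    intro hsub
    exact hSZ (hmin S hS Z hZ hsub)
  have key : ∀ S S₂, S ∈ G → S₂ ∈ G → S₂ ≠ Z → S₂ ≠ S → S₂ \ Z ⊆ S \ Z →
      Closed σ G S := by
    intro S S₂ hS hS2 hS2Z hne2 hsub
    by_contra hop
    obtain ⟨c, hc⟩ := hnonempty S₂ hS2 hS2Z
    have hcS : c ∈ S := (Finset.mem_sdiff.1 (hsub hc)).1
    have hnb : S₂ ∈ Neighbors σ G S :=
      mem_Neighbors'.2 ⟨hS2, hne2, hS, c, hcS, (Finset.mem_sdiff.1 hc).1⟩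
    obtain ⟨b, hbS2, -, hbprop⟩ := closed_iff'.1 (hiso S hS hop S₂ hnb)
    by_cases hbZ : b ∈ Z
    · exact hS2Z (hbprop Z hZ hbZ).symm
    · exact hne2 (hbprop S hS
        (Finset.mem_sdiff.1 (hsub (Finset.mem_sdiff.2 ⟨hbS2, hbZ⟩))).1).symm
  have FC : ∀ S a, S ∈ G → S ≠ Z → a ∈ S → (∀ U ∈ G, a ∈ U → U = S) →
      S \ Z ∈ G' → Closed σ G' (S \ Z) := by
    intro S a hS hSZ haS haU hmem
    have haZ : a ∉ Z := fun h => hSZ (haU Z hZ h).symm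
    refine closed_iff'.2 ⟨a, Finset.mem_sdiff.2 ⟨haS, haZ⟩, hmem, ?_⟩
    intro T hT haT
    obtain ⟨⟨S₁, ⟨hS₁G, hS₁Z⟩, hS₁T⟩, -⟩ := (hG'mem T).1 hT
    have haS₁ : a ∈ S₁ := by
      rw [← hS₁T] at haT
      exact (Finset.mem_sdiff.1 haT).1
    rw [← hS₁T, haU S₁ hS₁G haS₁]
  have FO : ∀ S, S ∈ G → S ≠ Z → S \ Z ∈ G' → ¬ Closed σ G' (S \ Z) →
      ¬ Closed σ G S := by
    intro S hS hSZ hmem hop hcl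
    obtain ⟨a, haS, -, haU⟩ := closed_iff'.1 hcl
    exact hop (FC S a hS hSZ haS haU hmem)
  have L1 : ∀ u, u ∈ G → u ≠ Z → Closed σ G u → Closed σ G'' u := by
    intro u hu huZ hc
    obtain ⟨a, hau, -, hprop⟩ := closed_iff'.1 hc
    exact closed_iff'.2 ⟨a, hau, (hG''mem u).2 ⟨hu, huZ⟩,
      fun S hS haS => hprop S ((hG''mem S).1 hS).1 haS⟩
  have hvG' : v \ Z ∈ G' := by
    refine (hG'mem (v \ Z)).2 ⟨⟨v, ⟨hv, fun h => hvZ h.symm⟩, rfl⟩, ?_⟩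
    intro S hS hSZ hsub
    by_cases hSv : S = v
    · rw [hSv]
    · exact absurd (key v S hv hS hSZ hSv hsub) hvopen
  have isoG' : ∀ u ∈ G', ¬ Closed σ G' u → ∀ w ∈ Neighbors σ G' u, Closed σ G' w := by
    intro u hu hop w hw
    obtain ⟨⟨S, ⟨hSG, hSZ⟩, rfl⟩, -⟩ := (hG'mem u).1 hu
    obtain ⟨hwG', hwu, -, a, hau, haw⟩ := mem_Neighbors'.1 hw
    obtain ⟨⟨S₁, ⟨hS₁G, hS₁Z⟩, rfl⟩, -⟩ := (hG'mem w).1 hwG'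
    have hSopen : ¬ Closed σ G S := FO S hSG hSZ hu hop
    have hSS₁ : S₁ ≠ S := fun h => hwu (by rw [h])
    have hnb : S₁ ∈ Neighbors σ G S := mem_Neighbors'.2 ⟨hS₁G, hSS₁, hSG,
      a, (Finset.mem_sdiff.1 hau).1, (Finset.mem_sdiff.1 haw).1⟩
    obtain ⟨b, hb1, -, hbprop⟩ := closed_iff'.1 (hiso S hSG hSopen S₁ hnb)
    exact FC S₁ b hS₁G hS₁Z hb1 hbprop hwG'
  have cardG' : (openVerts σ G').card ≤ n := by
    rw [← hn]
    apply card_le_of_sdiff_section (Z := Z)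
    intro T hT
    obtain ⟨hTG', hTop⟩ := mem_openVerts'.1 hT
    obtain ⟨⟨S, ⟨hSG, hSZ⟩, rfl⟩, -⟩ := (hG'mem T).1 hTG'
    exact ⟨S, mem_openVerts'.2 ⟨hSG, FO S hSG hSZ hTG' hTop⟩, rfl⟩
  have isoG'' : ∀ u ∈ G'', ¬ Closed σ G'' u → ∀ w ∈ Neighbors σ G'' u,
      Closed σ G'' w := by
    intro u hu hop w hw
    obtain ⟨huG, huZ⟩ := (hG''mem u).1 hu
    obtain ⟨hwG'', hwu, -, a, hau, haw⟩ := mem_Neighbors'.1 hw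
    obtain ⟨hwG, hwZ⟩ := (hG''mem w).1 hwG''
    have huop : ¬ Closed σ G u := fun h => hop (L1 u huG huZ h)
    have hnb : w ∈ Neighbors σ G u := mem_Neighbors'.2 ⟨hwG, hwu, huG, a, hau, haw⟩
    exact L1 w hwG hwZ (hiso u huG huop w hnb)
  have cardG'' : (openVerts σ G'').card ≤ n := by
    rw [← hn]
    apply Finset.card_le_card
    intro u hu
    obtain ⟨huG'', hop⟩ := mem_openVerts'.1 hu
    obtain ⟨huG, huZ⟩ := (hG''mem u).1 huG''
    exact mem_openVerts'.2 ⟨huG, fun h => hop (L1 u huG huZ h)⟩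
  have nbG' : (Neighbors σ G' (v \ Z)).card ≤ (Neighbors σ G v).card - 1 := by
    have h1 : (Neighbors σ G' (v \ Z)).card ≤ ((Neighbors σ G v).erase Z).card := by
      apply card_le_of_sdiff_section (Z := Z)
      intro T hT
      obtain ⟨hTG', hTvZ, -, a, havZ, haT⟩ := mem_Neighbors'.1 hT
      obtain ⟨⟨S, ⟨hSG, hSZ⟩, rfl⟩, -⟩ := (hG'mem T).1 hTG'
      have haS : a ∈ S := (Finset.mem_sdiff.1 haT).1
      have hav : a ∈ v := (Finset.mem_sdiff.1 havZ).1
      have hSv : S ≠ v := fun h => hTvZ (by rw [h])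
      exact ⟨S, Finset.mem_erase.2 ⟨hSZ,
        mem_Neighbors'.2 ⟨hSG, hSv, hv, a, hav, haS⟩⟩, rfl⟩
    rwa [Finset.card_erase_of_mem hZN] at h1
  have nbG'' : (Neighbors σ G'' v).card ≤ (Neighbors σ G v).card - 1 := by
    have h1 : Neighbors σ G'' v ⊆ (Neighbors σ G v).erase Z := by
      intro w hw
      obtain ⟨hwG'', hwv, -, a, hav, haw⟩ := mem_Neighbors'.1 hw
      obtain ⟨hwG, hwZ⟩ := (hG''mem w).1 hwG''
      exact Finset.mem_erase.2 ⟨hwZ, mem_Neighbors'.2 ⟨hwG, hwv, hv, a, hav, haw⟩⟩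
    calc (Neighbors σ G'' v).card ≤ _ := Finset.card_le_card h1
    _ = _ := Finset.card_erase_of_mem hZN
  obtain ⟨a₀, ha₀Z, -, ha₀prop⟩ := closed_iff'.1 hZc
  have hX'' : ((varsOf σ G'').card : ℤ) ≤ ((varsOf σ G).card : ℤ) - 1 := by
    have hss : varsOf σ G'' ⊂ varsOf σ G := by
      rw [Finset.ssubset_def]
      constructor
      · intro a ha
        obtain ⟨S, hS, haS⟩ := mem_varsOf'.1 ha
        exact mem_varsOf'.2 ⟨S, ((hG''mem S).1 hS).1, haS⟩
      · intro hcon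
        have h1 : a₀ ∈ varsOf σ G := mem_varsOf'.2 ⟨Z, hZ, ha₀Z⟩
        obtain ⟨S, hS, haS⟩ := mem_varsOf'.1 (hcon h1)
        exact ((hG''mem S).1 hS).2 (ha₀prop S ((hG''mem S).1 hS).1 haS)
    have := Finset.card_lt_card hss
    omega
  have hV'' : (G''.card : ℤ) = (G.card : ℤ) - 1 := by
    have h1 : G''.card = G.card - 1 := by rw [hG'']; exact Finset.card_erase_of_mem hZ
    have h2 : 1 ≤ G.card := Finset.card_pos.2 ⟨Z, hZ⟩
    omega
  have hX' : ((varsOf σ G').card : ℤ) ≤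
      ((varsOf σ G).card : ℤ) - (Z.card : ℤ) - (G.card : ℤ) + (G'.card : ℤ) + 1 := by
    have hsec : ∀ T : Finset σ, ∃ S, T ∈ G' → (S ∈ G ∧ S ≠ Z) ∧ S \ Z = T := by
      intro T
      by_cases hT : T ∈ G'
      · obtain ⟨⟨S, hS, hST⟩, -⟩ := (hG'mem T).1 hT
        exact ⟨S, fun _ => ⟨hS, hST⟩⟩
      · exact ⟨∅, fun h => absurd h hT⟩
    choose f hf using hsec
    set R : Finset (Finset σ) := G'.image f with hR
    have hRsub : R ⊆ G.erase Z := by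
      intro S hS
      obtain ⟨T, hT, rfl⟩ := Finset.mem_image.1 hS
      exact Finset.mem_erase.2 ⟨(hf T hT).1.2, (hf T hT).1.1⟩
    have hRcard : R.card = G'.card := by
      apply Finset.card_image_of_injOn
      intro T₁ h1 T₂ h2 he
      rw [← (hf T₁ h1).2, ← (hf T₂ h2).2, he]
    have hclosedB : ∀ S, S ∈ G → S ≠ Z → S ∉ R → Closed σ G S := by
      intro S hS hSZ hSR
      by_cases hmem : S \ Z ∈ G'
      · have h1 := hf (S \ Z) hmem
        have hne' : f (S \ Z) ≠ S := fun h => hSR (h ▸ Finset.mem_image_of_mem f hmem)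
        exact key S (f (S \ Z)) hS h1.1.1 h1.1.2 hne' (le_of_eq h1.2)
      · have himg : S \ Z ∈ (G.erase Z).image (fun S => S \ Z) :=
          Finset.mem_image_of_mem _ (Finset.mem_erase.2 ⟨hSZ, hS⟩)
        have h2 : ¬ ∀ U ∈ (G.erase Z).image (fun S => S \ Z), U ⊆ S \ Z → U = S \ Z := by
          intro hcon
          exact hmem (by rw [hG', minimalize, Finset.mem_filter]; exact ⟨himg, hcon⟩)
        push_neg at h2
        obtain ⟨U, hU, hUsub, hUne⟩ := h2
        obtain ⟨S₂, hS₂, rfl⟩ := Finset.mem_image.1 hU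
        rw [Finset.mem_erase] at hS₂
        have hS₂S : S₂ ≠ S := fun h => hUne (by rw [h])
        exact key S S₂ hS hS₂.2 hS₂.1 hS₂S hUsub
    have hvars : ∀ S, S ∈ G → S ≠ Z → S ∉ R →
        ∃ a, a ∈ S ∧ a ∉ Z ∧ a ∉ varsOf σ G' ∧ ∀ U ∈ G, a ∈ U → U = S := by
      intro S hS hSZ hSR
      obtain ⟨a, haS, -, haprop⟩ := closed_iff'.1 (hclosedB S hS hSZ hSR)
      have haZ : a ∉ Z := fun h => hSZ (haprop Z hZ h).symm
      refine ⟨a, haS, haZ, ?_, haprop⟩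
      intro hcon
      obtain ⟨T, hT, haT⟩ := mem_varsOf'.1 hcon
      have h1 := hf T hT
      have haf : a ∈ f T := by
        rw [← h1.2] at haT
        exact (Finset.mem_sdiff.1 haT).1
      have hfs : f T = S := haprop (f T) h1.1.1 haf
      exact hSR (hfs ▸ Finset.mem_image_of_mem f hT)
    set B : Finset (Finset σ) := (G.erase Z) \ R with hB
    have hBprop : ∀ S ∈ B, S ∈ G ∧ S ≠ Z ∧ S ∉ R := by
      intro S hS
      rw [hB, Finset.mem_sdiff, Finset.mem_erase] at hS
      exact ⟨hS.1.2, hS.1.1, hS.2⟩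
    have hBcard : B.card = (G.erase Z).card - R.card := Finset.card_sdiff_of_subset hRsub
    have hgsec : ∀ S : Finset σ, ∃ a, S ∈ B →
        a ∈ S ∧ a ∉ Z ∧ a ∉ varsOf σ G' ∧ ∀ U ∈ G, a ∈ U → U = S := by
      intro S
      by_cases hS : S ∈ B
      · obtain ⟨h1, h2, h3⟩ := hBprop S hS
        obtain ⟨a, ha⟩ := hvars S h1 h2 h3
        exact ⟨a, fun _ => ha⟩
      · exact ⟨(hne Z hZ).choose, fun h => absurd h hS⟩
    choose g hg using hgsec
    have hginj : Set.InjOn g B := by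
      intro S₁ h1 S₂ h2 he
      have p1 := hg S₁ h1
      have p2 := hg S₂ h2
      have hg2 : g S₁ ∈ S₂ := by rw [he]; exact p2.1
      exact ((p1.2.2.2) S₂ (hBprop S₂ h2).1 hg2).symm
    have hdisj : Disjoint (B.image g) (varsOf σ G') := by
      rw [Finset.disjoint_left]
      intro a ha hcon
      obtain ⟨S, hS, rfl⟩ := Finset.mem_image.1 ha
      exact (hg S hS).2.2.1 hcon
    have hsub2 : (B.image g) ∪ varsOf σ G' ⊆ varsOf σ G \ Z := by
      intro a ha
      rcases Finset.mem_union.1 ha with h | h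
      · obtain ⟨S, hS, rfl⟩ := Finset.mem_image.1 h
        have p := hg S hS
        exact Finset.mem_sdiff.2 ⟨mem_varsOf'.2 ⟨S, (hBprop S hS).1, p.1⟩, p.2.1⟩
      · obtain ⟨T, hT, haT⟩ := mem_varsOf'.1 h
        obtain ⟨⟨S, ⟨hSG, hSZ⟩, rfl⟩, -⟩ := (hG'mem T).1 hT
        exact Finset.mem_sdiff.2 ⟨mem_varsOf'.2 ⟨S, hSG, (Finset.mem_sdiff.1 haT).1⟩,
          (Finset.mem_sdiff.1 haT).2⟩
    have himgcard : (B.image g).card = B.card := Finset.card_image_of_injOn hginj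
    have hcount : B.card + (varsOf σ G').card ≤ (varsOf σ G \ Z).card := by
      calc B.card + (varsOf σ G').card = ((B.image g) ∪ varsOf σ G').card := by
            rw [Finset.card_union_of_disjoint hdisj, himgcard]
      _ ≤ _ := Finset.card_le_card hsub2
    have hZsub : Z ⊆ varsOf σ G := fun a ha => mem_varsOf'.2 ⟨Z, hZ, ha⟩
    have hc2 : (varsOf σ G \ Z).card = (varsOf σ G).card - Z.card :=
      Finset.card_sdiff_of_subset hZsub
    have hc3 : Z.card ≤ (varsOf σ G).card := Finset.card_le_card hZsub
    have hc4 : (G.erase Z).card = G.card - 1 := Finset.card_erase_of_mem hZ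
    have hc5 : 1 ≤ G.card := Finset.card_pos.2 ⟨Z, hZ⟩
    have hc6 : R.card ≤ (G.erase Z).card := Finset.card_le_card hRsub
    omega
  exact ⟨⟨isoG', cardG'⟩, ⟨isoG'', cardG''⟩, ⟨hvG', Or.inr nbG'⟩, Or.inr nbG'',
    hX'', hV'', hX'⟩
end

section
/- Let I ⊆ R be a square-free monomial ideal with minimal generators f_1,...,f_μ and labeled hypergraph H = H(I). Suppose vertex 1 is open. Let x be a variable not appearing in any generator of I, and set J = (f_1 x, f_2, ..., f_μ). Let H' = H(J) and H'' = H((x, J)). Then |V(H)| = |V(H')| = |V(H'')|, |X(H')| = |X(H'')| = |X(H)| + 1, vertex 1 is closed in both H' and H'', and J : x = I. -/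
/-!
Common setup: square-free monomial ideals in `R = K[A]` (here `MvPolynomial σ K`
with `σ` the finite alphabet `A`), encoded by the finite antichain `G` of
supports of their minimal monomial generators; the labeled hypergraph `H(I)`
of such an ideal, whose vertex set is (in bijection with) `G` and whose edge
labeled by a variable `a` is `E_a = { S ∈ G : a ∈ S }`; and Castelnuovo–Mumford
regularity and projective dimension of `R/I`, defined via graded Betti numbers
`β_{ij}(R/I) = dim_K Tor_i^R(R/I, K)_j`, which are computed from the Koszul
complex of the variables tensored with `R/I`.
-/

open MvPolynomial Finset
open scoped Classical

open SqfreeHyp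

set_option linter.unusedSectionVars false

section Aux
open MvPolynomial Finset
open scoped Classical

variable {σ : Type} [Fintype σ] [LinearOrder σ] {K : Type} [Field K]

noncomputable def degOf (S : Finset σ) : σ →₀ ℕ := ∑ a ∈ S, Finsupp.single a 1

lemma degOf_apply (S : Finset σ) (b : σ) : degOf S b = if b ∈ S then 1 else 0 := by
  classical
  simp [degOf, Finset.sum_apply', Finsupp.single_apply]

lemma degOf_le_iff {S : Finset σ} {m : σ →₀ ℕ} : degOf S ≤ m ↔ ∀ b ∈ S, 1 ≤ m b := by
  rw [Finsupp.le_def]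
  constructor
  · intro h b hb; have := h b; rwa [degOf_apply, if_pos hb] at this
  · intro h b; rw [degOf_apply]; split
    · exact h b ‹_›
    · exact Nat.zero_le _

lemma sqMon_eq (S : Finset σ) :
    SqfreeHyp.sqMon σ K S = monomial (degOf S) (1 : K) := by
  rw [degOf, monomial_sum_one]
  rfl

lemma mem_monIdeal {G : Finset (Finset σ)} {p : MvPolynomial σ K} :
    p ∈ SqfreeHyp.monIdeal σ K G ↔ ∀ m ∈ p.support, ∃ S ∈ G, degOf S ≤ m := by
  have : SqfreeHyp.monIdeal σ K G =
      Ideal.span ((fun d => monomial d (1 : K)) '' (degOf '' (G : Set (Finset σ)))) := by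
    unfold SqfreeHyp.monIdeal
    rw [← Set.image_comp]
    congr 1
    exact Set.image_congr fun S _ => sqMon_eq S
  rw [this, mem_ideal_span_monomial_image]
  constructor
  · intro h m hm
    obtain ⟨d, hd, hdm⟩ := h m hm
    obtain ⟨S, hS, rfl⟩ := hd
    exact ⟨S, hS, hdm⟩
  · intro h m hm
    obtain ⟨S, hS, hSm⟩ := h m hm
    exact ⟨degOf S, ⟨S, hS, rfl⟩, hSm⟩

end Aux


/-- Lemma `Lfill`: let `I` have minimal generating supports
`G`, let `v ∈ G` be an open vertex and `x` a variable not appearing in `I`.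
Then `J = (f_v·x, rest)` (supports `GJ`) and `(x, J)` (minimal supports `G2`,
since `x` replaces `f_v·x`) satisfy: `|V| = |V'| = |V''|`,
`|X'| = |X''| = |X| + 1`, vertex `v` is closed in both new hypergraphs, and
`J : x = I`. -/
theorem stmt_10 (σ : Type) [Fintype σ] [LinearOrder σ] (K : Type) [Field K]
    (G : Finset (Finset σ)) (hmin : MinGens σ G) (hne : ∀ S ∈ G, S.Nonempty)
    (v : Finset σ) (hv : v ∈ G) (hvopen : ¬ Closed σ G v)
    (x : σ) (hx : x ∉ varsOf σ G)
    (GJ G2 : Finset (Finset σ))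
    (hGJ : GJ = insert (insert x v) (G.erase v))
    (hG2 : G2 = insert {x} (G.erase v)) :
    MinGens σ GJ ∧ MinGens σ G2 ∧
    GJ.card = G.card ∧ G2.card = G.card ∧
    (varsOf σ GJ).card = (varsOf σ G).card + 1 ∧
    (varsOf σ G2).card = (varsOf σ G).card + 1 ∧
    Closed σ GJ (insert x v) ∧ Closed σ G2 {x} ∧
    Submodule.colon (monIdeal σ K GJ) (Ideal.span {(X x : MvPolynomial σ K)})
      = monIdeal σ K G := by
  classical
  subst hGJ hG2
  have hxS : ∀ S ∈ G, x ∉ S := by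
    intro S hS hxs
    exact hx (Finset.mem_biUnion.mpr ⟨S, hS, hxs⟩)
  have hxv : x ∉ v := hxS v hv
  -- MinGens GJ
  have h1 : MinGens σ (insert (insert x v) (G.erase v)) := by
    intro S hS T hT hST
    rcases Finset.mem_insert.1 hS with rfl | hS' <;>
      rcases Finset.mem_insert.1 hT with rfl | hT'
    · rfl
    · exact absurd (hST (Finset.mem_insert_self x v))
        (hxS T (Finset.mem_of_mem_erase hT'))
    · rw [Finset.subset_insert_iff_of_notMem (hxS S (Finset.mem_of_mem_erase hS'))] at hST
      exact absurd (hmin S (Finset.mem_of_mem_erase hS') v hv hST)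
        (Finset.ne_of_mem_erase hS')
    · exact hmin S (Finset.mem_of_mem_erase hS') T (Finset.mem_of_mem_erase hT') hST
  -- MinGens G2
  have h2 : MinGens σ (insert {x} (G.erase v)) := by
    intro S hS T hT hST
    rcases Finset.mem_insert.1 hS with rfl | hS' <;>
      rcases Finset.mem_insert.1 hT with rfl | hT'
    · rfl
    · exact absurd (hST (Finset.mem_singleton_self x))
        (hxS T (Finset.mem_of_mem_erase hT'))
    · rcases Finset.subset_singleton_iff.1 hST with rfl | rfl
      · exact absurd (hne ∅ (Finset.mem_of_mem_erase hS')) (by simp)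
      · exact absurd (Finset.mem_singleton_self x) (hxS _ (Finset.mem_of_mem_erase hS'))
    · exact hmin S (Finset.mem_of_mem_erase hS') T (Finset.mem_of_mem_erase hT') hST
  -- cards
  have hxvG : insert x v ∉ G.erase v := fun h =>
    hxS _ (Finset.mem_of_mem_erase h) (Finset.mem_insert_self x v)
  have hxG : ({x} : Finset σ) ∉ G.erase v := fun h =>
    hxS _ (Finset.mem_of_mem_erase h) (Finset.mem_singleton_self x)
  have h3 : (insert (insert x v) (G.erase v)).card = G.card := by
    rw [Finset.card_insert_of_notMem hxvG, Finset.card_erase_add_one hv]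
  have h4 : (insert ({x} : Finset σ) (G.erase v)).card = G.card := by
    rw [Finset.card_insert_of_notMem hxG, Finset.card_erase_add_one hv]
  -- varsOf
  have hvG : varsOf σ G = v ∪ (G.erase v).biUnion id := by
    conv_lhs => rw [varsOf, ← Finset.insert_erase hv, Finset.biUnion_insert]
    rfl
  have h5 : varsOf σ (insert (insert x v) (G.erase v)) = insert x (varsOf σ G) := by
    rw [varsOf, Finset.biUnion_insert, hvG]
    simp [Finset.insert_union]
  have hvsub : v ⊆ (G.erase v).biUnion id := by
    intro a ha
    have hne' : EdgeOf σ G a ≠ {v} := fun h => hvopen ⟨a, h⟩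
    have hvE : v ∈ EdgeOf σ G a := Finset.mem_filter.2 ⟨hv, ha⟩
    have : ¬ EdgeOf σ G a ⊆ {v} := by
      intro hsub
      exact hne' (Finset.Subset.antisymm hsub (Finset.singleton_subset_iff.2 hvE))
    obtain ⟨w, hw, hwv⟩ := Finset.not_subset.1 this
    rw [Finset.mem_singleton] at hwv
    have hwG := Finset.mem_filter.1 hw
    exact Finset.mem_biUnion.2 ⟨w, Finset.mem_erase.2 ⟨hwv, hwG.1⟩, hwG.2⟩
  have h6 : varsOf σ (insert ({x} : Finset σ) (G.erase v)) = insert x (varsOf σ G) := by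
    rw [varsOf, Finset.biUnion_insert, hvG, Finset.union_eq_right.2 hvsub]
    simp [Finset.insert_eq, -Finset.singleton_union]
  have hxcard : ∀ A : Finset σ, A = insert x (varsOf σ G) →
      A.card = (varsOf σ G).card + 1 := by
    intro A hA; rw [hA, Finset.card_insert_of_notMem hx]
  -- closedness
  have h7 : Closed σ (insert (insert x v) (G.erase v)) (insert x v) := by
    refine ⟨x, ?_⟩
    ext S
    simp only [EdgeOf, Finset.mem_filter, Finset.mem_insert, Finset.mem_singleton]
    constructor
    · rintro ⟨rfl | hS, hxS'⟩
      · rfl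
      · exact absurd hxS' (hxS S (Finset.mem_of_mem_erase hS))
    · rintro rfl
      exact ⟨Or.inl rfl, Finset.mem_insert_self x v⟩
  have h8 : Closed σ (insert ({x} : Finset σ) (G.erase v)) {x} := by
    refine ⟨x, ?_⟩
    ext S
    simp only [EdgeOf, Finset.mem_filter, Finset.mem_insert, Finset.mem_singleton]
    constructor
    · rintro ⟨rfl | hS, hxS'⟩
      · rfl
      · exact absurd hxS' (hxS S (Finset.mem_of_mem_erase hS))
    · rintro rfl
      exact ⟨Or.inl rfl, Finset.mem_singleton_self x⟩
  -- colon
  have h9 : Submodule.colon (monIdeal σ K (insert (insert x v) (G.erase v)))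
      (Ideal.span {(X x : MvPolynomial σ K)}) = monIdeal σ K G := by
    ext p
    rw [← Ideal.submodule_span_eq, Submodule.mem_colon_span_singleton, smul_eq_mul,
      mem_monIdeal, mem_monIdeal, support_mul_X]
    rw [Finset.forall_mem_map]
    refine forall₂_congr fun m _ => ?_
    simp only [addRightEmbedding_apply]
    constructor
    · rintro ⟨S, hS, hle⟩
      rcases Finset.mem_insert.1 hS with rfl | hS'
      · refine ⟨v, hv, degOf_le_iff.2 fun b hb => ?_⟩
        have hble := degOf_le_iff.1 hle b (Finset.mem_insert_of_mem hb)
        have hbx : b ≠ x := fun h => hxv (h ▸ hb)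
        rwa [Finsupp.add_apply, Finsupp.single_apply, if_neg (fun h => hbx h.symm),
          add_zero] at hble
      · refine ⟨S, Finset.mem_of_mem_erase hS', degOf_le_iff.2 fun b hb => ?_⟩
        have hble := degOf_le_iff.1 hle b hb
        have hbx : b ≠ x := fun h => hxS S (Finset.mem_of_mem_erase hS') (h ▸ hb)
        rwa [Finsupp.add_apply, Finsupp.single_apply, if_neg (fun h => hbx h.symm),
          add_zero] at hble
    · rintro ⟨S, hS, hle⟩
      by_cases hSv : S = v
      · subst hSv
        refine ⟨insert x S, Finset.mem_insert_self _ _, degOf_le_iff.2 fun b hb => ?_⟩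
        rcases Finset.mem_insert.1 hb with rfl | hb'
        · simp [Finsupp.add_apply, Finsupp.single_apply]
        · have := degOf_le_iff.1 hle b hb'
          exact le_trans this (by simp [Finsupp.add_apply])
      · refine ⟨S, Finset.mem_insert_of_mem (Finset.mem_erase.2 ⟨hSv, hS⟩),
          le_trans hle le_self_add⟩
  exact ⟨h1, h2, h3, h4, hxcard _ h5, hxcard _ h6, h7, h8, h9⟩
end
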